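/- The von Mises–Fisher mechanism satisfies metric local differential privacy with parameter κ under the chordal metric: for all unit vectors u, u' in S^{d-1} and all measurable S ⊆ S^{d-1}, Pr[M(u) ∈ S] ≤ exp(κ‖u − u'‖₂) · Pr[M(u') ∈ S], where M(u) has density f(y|u) = C_d(κ)·exp(κ·uᵀy) with respect to the uniform measure on the sphere. -/

import Mathlib

open MeasureTheory Real

/-! Since `⟪u, y⟫ - ⟪u', y⟫ = ⟪u - u', y⟫ ≤ ‖u - u'‖` for `y` on the unit sphere (Cauchy–Schwarz),
the density of `M u` is pointwise at most `exp (κ ‖u - u'‖)` times that of `M u'`; integrating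
over `S` gives the bound. -/

open scoped ENNReal RealInnerProductSpace

section

variable {E : Type*} [NormedAddCommGroup E] [InnerProductSpace ℝ E]

theorem real_inner_le_inner_add_norm_sub_mul_norm (u u' y : E) :
    ⟪u, y⟫ ≤ ⟪u', y⟫ + ‖u - u'‖ * ‖y‖ := by
  have h := real_inner_le_norm (u - u') y
  rw [inner_sub_left] at h
  linarith

noncomputable def vmfDensity (κ C : ℝ) (μ y : E) : ℝ≥0∞ :=
  ENNReal.ofReal (C * exp (κ * ⟪μ, y⟫))

theorem vmfDensity_le_exp_mul {κ : ℝ} (hκ : 0 ≤ κ) (C : ℝ) (u u' : E) {y : E} (hy : ‖y‖ ≤ 1) :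
    vmfDensity κ C u y ≤ ENNReal.ofReal (exp (κ * ‖u - u'‖)) * vmfDensity κ C u' y := by
  have hexponent : κ * ⟪u, y⟫ ≤ κ * ‖u - u'‖ + κ * ⟪u', y⟫ := by
    have h := real_inner_le_inner_add_norm_sub_mul_norm u u' y
    have : ‖u - u'‖ * ‖y‖ ≤ ‖u - u'‖ := mul_le_of_le_one_right (norm_nonneg _) hy
    nlinarith
  rw [vmfDensity, vmfDensity, ← ENNReal.ofReal_mul (exp_nonneg _), ENNReal.ofReal_le_ofReal_iff']
  rcases le_or_gt C 0 with hC | hC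
  · exact Or.inr (mul_nonpos_of_nonpos_of_nonneg hC (exp_nonneg _))
  · left
    calc C * exp (κ * ⟪u, y⟫) ≤ C * exp (κ * ‖u - u'‖ + κ * ⟪u', y⟫) := by gcongr
      _ = exp (κ * ‖u - u'‖) * (C * exp (κ * ⟪u', y⟫)) := by rw [exp_add]; ring

end

theorem MeasureTheory.withDensity_apply_le_mul_of_ae_le {α : Type*} [MeasurableSpace α]
    {μ : Measure α} {f g : α → ℝ≥0∞} {c : ℝ≥0∞} (hc : c ≠ ∞) (h : ∀ᵐ x ∂μ, f x ≤ c * g x)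
    (s : Set α) : μ.withDensity f s ≤ c * μ.withDensity g s :=
  calc μ.withDensity f s ≤ μ.withDensity (c • g) s := withDensity_mono h s
    _ = c * μ.withDensity g s := by rw [withDensity_smul' c g hc]; rfl

theorem vmf_metric_ldp_general
    (d : ℕ) (κ C : ℝ) (hκ : 0 ≤ κ)
    (ν : Measure (EuclideanSpace ℝ (Fin d)))
    (hν : ν {y : EuclideanSpace ℝ (Fin d) | ‖y‖ ≠ 1} = 0)
    (M : EuclideanSpace ℝ (Fin d) → Measure (EuclideanSpace ℝ (Fin d)))
    (hM : ∀ μ, M μ = ν.withDensity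
      (fun y => ENNReal.ofReal (C * Real.exp (κ * (inner ℝ μ y : ℝ)))))
    (u u' : EuclideanSpace ℝ (Fin d))
    (S : Set (EuclideanSpace ℝ (Fin d))) :
    M u S ≤ ENNReal.ofReal (Real.exp (κ * ‖u - u'‖)) * M u' S := by
  have hsphere : ∀ᵐ y ∂ν, ‖y‖ ≤ 1 :=
    (measure_eq_zero_iff_ae_notMem.mp hν).mono fun y hy => (not_not.mp hy).le
  rw [hM u, hM u']
  exact withDensity_apply_le_mul_of_ae_le ENNReal.ofReal_ne_top
    (hsphere.mono fun y hy => vmfDensity_le_exp_mul hκ C u u' hy) S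

/-- **vMF mechanism satisfies metric LDP under the chordal metric.**
The mechanism `M μ` has density `C_d(κ) · exp(κ ⟪μ, y⟫)` with respect to the
uniform measure `ν` on the sphere `S^{d-1}`. For unit vectors `u, u'` and any
measurable `S`, `Pr[M(u) ∈ S] ≤ exp(κ‖u − u'‖₂) · Pr[M(u') ∈ S]`. -/
theorem vmf_metric_ldp
    (d : ℕ) (κ C : ℝ) (hκ : 0 ≤ κ) (hC : 0 < C)
    (ν : Measure (EuclideanSpace ℝ (Fin d)))
    (hν : ν {y : EuclideanSpace ℝ (Fin d) | ‖y‖ ≠ 1} = 0)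
    (M : EuclideanSpace ℝ (Fin d) → Measure (EuclideanSpace ℝ (Fin d)))
    (hM : ∀ μ, M μ = ν.withDensity
      (fun y => ENNReal.ofReal (C * Real.exp (κ * (inner ℝ μ y : ℝ)))))
    (u u' : EuclideanSpace ℝ (Fin d)) (hu : ‖u‖ = 1) (hu' : ‖u'‖ = 1)
    (S : Set (EuclideanSpace ℝ (Fin d))) (hS : MeasurableSet S) :
    M u S ≤ ENNReal.ofReal (Real.exp (κ * ‖u - u'‖)) * M u' S :=
  vmf_metric_ldp_general d κ C hκ ν hν M hM u u' S
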